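/- For the erasure channel joint distribution of (S,A) with S uniform on {0,1} and erasure probability 3/4, any random variable U making S and A conditionally independent given U satisfies I(S,A;U) ≥ H(1/4). -/

import Mathlib

/-- Binary entropy function (base-2 logs). -/
noncomputable def H2 (x : ℝ) : ℝ := -(x * Real.logb 2 x) - (1-x) * Real.logb 2 (1-x)

/-- Output alphabet of the binary erasure channel: 0, e, 1. -/
inductive OutA | o0 | oe | o1
deriving DecidableEq

instance : Fintype OutA :=
  ⟨{OutA.o0, OutA.oe, OutA.o1}, fun x => by cases x <;> simp⟩

/-- Target joint pmf of (S,A): S uniform, A = S w.p. 1/4, A = e w.p. 3/4. -/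
noncomputable def jSA : Bool → OutA → ℝ :=
  fun s a =>
    match s, a with
    | _, .oe => 3/8
    | false, .o0 => 1/8
    | true, .o1 => 1/8
    | _, _ => 0

/-- `q` is a joint pmf on S × U × A. -/
def IsJoint {n : ℕ} (q : Bool → Fin n → OutA → ℝ) : Prop :=
  (∀ s u a, 0 ≤ q s u a) ∧ ∑ s : Bool, ∑ u : Fin n, ∑ a : OutA, q s u a = 1

/-- The (S,A)-marginal of `q` is the erasure-channel joint pmf. -/
def HasMarginal {n : ℕ} (q : Bool → Fin n → OutA → ℝ) : Prop :=
  ∀ s a, (∑ u : Fin n, q s u a) = jSA s a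

/-- S and A are conditionally independent given U. -/
def CondIndep {n : ℕ} (q : Bool → Fin n → OutA → ℝ) : Prop :=
  ∀ s u a, q s u a * (∑ s' : Bool, ∑ a' : OutA, q s' u a') =
    (∑ a' : OutA, q s u a') * (∑ s' : Bool, q s' u a)

/-- Mutual information I((S,A);U) in bits. -/
noncomputable def ISAU {n : ℕ} (q : Bool → Fin n → OutA → ℝ) : ℝ :=
  ∑ s : Bool, ∑ u : Fin n, ∑ a : OutA,
    q s u a * Real.logb 2 (q s u a /
      ((∑ u' : Fin n, q s u' a) * (∑ s' : Bool, ∑ a' : OutA, q s' u a')))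

lemma univ_OutA : (Finset.univ : Finset OutA) = {OutA.o0, OutA.oe, OutA.o1} := by decide

lemma sum_OutA (f : OutA → ℝ) : ∑ a, f a = f .o0 + f .oe + f .o1 := by
  rw [univ_OutA]
  rw [Finset.sum_insert (by decide), Finset.sum_insert (by decide), Finset.sum_singleton]
  ring

/-- Two-point convexity: `p log p + r log r ≥ (p+r) log ((p+r)/2)`. -/
lemma two_point (p r : ℝ) (hp : 0 ≤ p) (hr : 0 ≤ r) :
    (p+r) * Real.logb 2 (p+r) - (p+r) ≤ p * Real.logb 2 p + r * Real.logb 2 r := by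
  have hlog2 : (0:ℝ) < Real.log 2 := Real.log_pos (by norm_num)
  rcases eq_or_lt_of_le hp with h|hp'
  · simp only [← h, zero_add, Real.logb_zero, mul_zero, zero_mul]
    linarith
  rcases eq_or_lt_of_le hr with h|hr'
  · simp only [← h, add_zero, Real.logb_zero, mul_zero, zero_mul]
    linarith
  have hpr : 0 < p + r := by linarith
  have h1 := Real.log_le_sub_one_of_pos (show 0 < (p+r)/(2*p) by positivity)
  have h2 := Real.log_le_sub_one_of_pos (show 0 < (p+r)/(2*r) by positivity)
  rw [Real.log_div (by positivity) (by positivity),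
      Real.log_mul (by norm_num) (ne_of_gt hp')] at h1
  rw [Real.log_div (by positivity) (by positivity),
      Real.log_mul (by norm_num) (ne_of_gt hr')] at h2
  have e1 : p * ((p+r)/(2*p) - 1) = (p+r)/2 - p := by field_simp
  have e2 : r * ((p+r)/(2*r) - 1) = (p+r)/2 - r := by field_simp
  have k1 := mul_le_mul_of_nonneg_left h1 hp'.le
  have k2 := mul_le_mul_of_nonneg_left h2 hr'.le
  rw [e1] at k1
  rw [e2] at k2
  have key : (p+r) * Real.log (p+r) - (p+r) * Real.log 2 ≤ p * Real.log p + r * Real.log r := by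
    nlinarith [k1, k2]
  simp only [Real.logb]
  rw [← sub_nonneg]
  have e3 : p * (Real.log p / Real.log 2) + r * (Real.log r / Real.log 2) -
      ((p + r) * (Real.log (p + r) / Real.log 2) - (p + r)) =
      (p*Real.log p + r*Real.log r - ((p+r)*Real.log (p+r) - (p+r)*Real.log 2))/Real.log 2 := by
    field_simp
  rw [e3]
  exact div_nonneg (by linarith) hlog2.le

/-- Per-`u` structural bound for the erasure source. -/
lemma peru6 (p0 pe re r1 : ℝ) (h0 : 0 ≤ p0) (he : 0 ≤ pe) (h2 : 0 ≤ re) (h3 : 0 ≤ r1)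
    (hA : (re + r1) * p0 = 0) (hB : (p0 + pe) * r1 = 0) :
    (p0 + pe + re + r1) * Real.logb 2 (p0 + pe + re + r1) - (p0 + pe + re + r1) ≤
      p0 * Real.logb 2 p0 + pe * Real.logb 2 pe + re * Real.logb 2 re + r1 * Real.logb 2 r1 := by
  rcases eq_or_lt_of_le h0 with hp|hp
  · rcases eq_or_lt_of_le h3 with hq|hq
    · have := two_point pe re he h2
      simp only [← hp, ← hq, Real.logb_zero, mul_zero, zero_mul, zero_add, add_zero] at *
      linarith
    · have hpe : pe = 0 := by nlinarith
      have := two_point re r1 h2 h3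
      simp only [← hp, hpe, Real.logb_zero, mul_zero, zero_mul, zero_add, add_zero] at *
      linarith
  · have hre : re = 0 := by nlinarith
    have hr1 : r1 = 0 := by nlinarith
    have := two_point p0 pe h0 he
    simp only [hre, hr1, Real.logb_zero, mul_zero, zero_mul, zero_add, add_zero] at *
    linarith

lemma term_split (t j w : ℝ) (ht : 0 ≤ t) (hj : t ≤ j) (hw : t ≤ w) :
    t * Real.logb 2 (t / (j * w)) = t * Real.logb 2 t - t * Real.logb 2 j - t * Real.logb 2 w := by
  rcases eq_or_lt_of_le ht with h|h
  · simp [← h]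
  · have hj' : 0 < j := lt_of_lt_of_le h hj
    have hw' : 0 < w := lt_of_lt_of_le h hw
    rw [Real.logb_div (ne_of_gt h) (mul_ne_zero (ne_of_gt hj') (ne_of_gt hw')),
        Real.logb_mul (ne_of_gt hj') (ne_of_gt hw')]
    ring

lemma const_eval :
    (1/8)*Real.logb 2 (1/8) + (3/8)*Real.logb 2 (3/8) + (3/8)*Real.logb 2 (3/8)
      + (1/8)*Real.logb 2 (1/8) + H2 (1/4) = -1 := by
  have hlog2 : (0:ℝ) < Real.log 2 := Real.log_pos (by norm_num)
  have l8 : Real.log (1/8) = -(3*Real.log 2) := by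
    rw [show (1/8:ℝ) = 2^(-3:ℤ) by norm_num, Real.log_zpow]; push_cast; ring
  have l38 : Real.log (3/8) = Real.log 3 - 3*Real.log 2 := by
    rw [Real.log_div (by norm_num) (by norm_num), show (8:ℝ) = 2^3 by norm_num, Real.log_pow]
    push_cast; ring
  have l4 : Real.log (1/4) = -(2*Real.log 2) := by
    rw [show (1/4:ℝ) = 2^(-2:ℤ) by norm_num, Real.log_zpow]; push_cast; ring
  have l34 : Real.log (3/4) = Real.log 3 - 2*Real.log 2 := by
    rw [Real.log_div (by norm_num) (by norm_num), show (4:ℝ) = 2^2 by norm_num, Real.log_pow]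
    push_cast; ring
  simp only [H2, Real.logb, show (1:ℝ) - 1/4 = 3/4 by norm_num, l8, l38, l4, l34]
  field_simp
  ring

/-- Converse half of the Wyner common information computation: every finite U
making S and A conditionally independent satisfies I(S,A;U) ≥ H(1/4). -/
theorem stmt11 : ∀ (n : ℕ) (q : Bool → Fin n → OutA → ℝ),
    IsJoint q → HasMarginal q → CondIndep q → ISAU q ≥ H2 (1/4) := by
  intro n q hJ hm hci
  obtain ⟨hnn, hsum⟩ := hJ
  -- zero constraints
  have hz1 : ∀ u, q false u OutA.o1 = 0 := by
    intro u
    have h0 : ∑ u', q false u' OutA.o1 = 0 := by rw [hm false OutA.o1]; rfl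
    exact (Finset.sum_eq_zero_iff_of_nonneg
      (fun i _ => hnn false i OutA.o1)).mp h0 u (Finset.mem_univ u)
  have hz2 : ∀ u, q true u OutA.o0 = 0 := by
    intro u
    have h0 : ∑ u', q true u' OutA.o0 = 0 := by rw [hm true OutA.o0]; rfl
    exact (Finset.sum_eq_zero_iff_of_nonneg
      (fun i _ => hnn true i OutA.o0)).mp h0 u (Finset.mem_univ u)
  -- rewrite mutual information
  have step1 : ∀ s u a, q s u a * Real.logb 2 (q s u a /
      ((∑ u' : Fin n, q s u' a) * (∑ s' : Bool, ∑ a' : OutA, q s' u a'))) =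
      q s u a * Real.logb 2 (q s u a) - q s u a * Real.logb 2 (jSA s a)
        - q s u a * Real.logb 2 (∑ s' : Bool, ∑ a' : OutA, q s' u a') := by
    intro s u a
    rw [hm s a]
    refine term_split _ _ _ (hnn s u a) ?_ ?_
    · rw [← hm s a]
      exact Finset.single_le_sum (fun i _ => hnn s i a) (Finset.mem_univ u)
    · exact le_trans (Finset.single_le_sum (fun a' _ => hnn s u a') (Finset.mem_univ a))
        (Finset.single_le_sum (f := fun s' => ∑ a', q s' u a')
          (fun s' _ => Finset.sum_nonneg fun a' _ => hnn s' u a') (Finset.mem_univ s))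
  have hT2 : ∑ s : Bool, ∑ u : Fin n, ∑ a : OutA, q s u a * Real.logb 2 (jSA s a)
      = ∑ s : Bool, ∑ a : OutA, jSA s a * Real.logb 2 (jSA s a) := by
    refine Finset.sum_congr rfl fun s _ => ?_
    rw [Finset.sum_comm]
    refine Finset.sum_congr rfl fun a _ => ?_
    rw [← Finset.sum_mul, hm s a]
  have hT1 : ∑ s : Bool, ∑ u : Fin n, ∑ a : OutA, q s u a * Real.logb 2 (q s u a)
      = ∑ u : Fin n, ∑ s : Bool, ∑ a : OutA, q s u a * Real.logb 2 (q s u a) :=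
    Finset.sum_comm
  have hT3 : ∑ s : Bool, ∑ u : Fin n, ∑ a : OutA,
        q s u a * Real.logb 2 (∑ s' : Bool, ∑ a' : OutA, q s' u a')
      = ∑ u : Fin n, (∑ s : Bool, ∑ a : OutA, q s u a) *
          Real.logb 2 (∑ s' : Bool, ∑ a' : OutA, q s' u a') := by
    rw [Finset.sum_comm]
    refine Finset.sum_congr rfl fun u _ => ?_
    rw [Finset.sum_mul]
    refine Finset.sum_congr rfl fun s _ => ?_
    rw [Finset.sum_mul]
  have key1 : ISAU q = (∑ u : Fin n,
      ((∑ s : Bool, ∑ a : OutA, q s u a * Real.logb 2 (q s u a))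
        - (∑ s : Bool, ∑ a : OutA, q s u a) *
            Real.logb 2 (∑ s' : Bool, ∑ a' : OutA, q s' u a')))
      - ∑ s : Bool, ∑ a : OutA, jSA s a * Real.logb 2 (jSA s a) := by
    unfold ISAU
    simp_rw [step1]
    simp only [Finset.sum_sub_distrib]
    rw [hT1, hT2, hT3]
    ring
  -- total mass of U
  have hsum1 : ∑ u : Fin n, ∑ s : Bool, ∑ a : OutA, q s u a = 1 := by
    rw [Finset.sum_comm]; exact hsum
  -- per-u bound
  have per_u : ∀ u : Fin n,
      (∑ s : Bool, ∑ a : OutA, q s u a) *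
          Real.logb 2 (∑ s' : Bool, ∑ a' : OutA, q s' u a')
        - (∑ s : Bool, ∑ a : OutA, q s u a)
        ≤ ∑ s : Bool, ∑ a : OutA, q s u a * Real.logb 2 (q s u a) := by
    intro u
    have hA := hci true u OutA.o0
    have hB := hci false u OutA.o1
    simp only [Fintype.sum_bool, sum_OutA, hz1 u, hz2 u, zero_mul, mul_zero,
      Real.logb_zero, add_zero, zero_add] at hA hB ⊢
    have key := peru6 (q false u .o0) (q false u .oe) (q true u .oe) (q true u .o1)
      (hnn _ _ _) (hnn _ _ _) (hnn _ _ _) (hnn _ _ _) hA.symm hB.symm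
    have e : q true u OutA.oe + q true u OutA.o1 + (q false u OutA.o0 + q false u OutA.oe)
        = q false u OutA.o0 + q false u OutA.oe + q true u OutA.oe + q true u OutA.o1 := by ring
    rw [e]
    linarith
  -- value of the constant sum
  have hC : ∑ s : Bool, ∑ a : OutA, jSA s a * Real.logb 2 (jSA s a)
      = (1/8)*Real.logb 2 (1/8) + (3/8)*Real.logb 2 (3/8) + (3/8)*Real.logb 2 (3/8)
        + (1/8)*Real.logb 2 (1/8) := by
    simp only [Fintype.sum_bool, sum_OutA, jSA]
    simp [Real.logb_zero]
    ring
  have main : ∑ u : Fin n,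
      ((∑ s : Bool, ∑ a : OutA, q s u a * Real.logb 2 (q s u a))
        - (∑ s : Bool, ∑ a : OutA, q s u a) *
            Real.logb 2 (∑ s' : Bool, ∑ a' : OutA, q s' u a')) ≥ -1 := by
    have h := Finset.sum_le_sum (s := (Finset.univ : Finset (Fin n)))
      (f := fun u => -(∑ s : Bool, ∑ a : OutA, q s u a))
      (g := fun u => (∑ s : Bool, ∑ a : OutA, q s u a * Real.logb 2 (q s u a))
        - (∑ s : Bool, ∑ a : OutA, q s u a) *
            Real.logb 2 (∑ s' : Bool, ∑ a' : OutA, q s' u a'))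
      (fun u _ => by have := per_u u; linarith)
    calc _ ≥ ∑ u : Fin n, -(∑ s : Bool, ∑ a : OutA, q s u a) := h
      _ = -1 := by rw [Finset.sum_neg_distrib, hsum1]
  rw [key1, hC]
  linarith [const_eval, main]
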